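/- arXiv:1605.04027 — 2 statements merged into one kernel-verified Lean document; each statement's English description precedes it below -/
import Mathlib

section
/- Let n ∈ {2,3}, let Ω ⊂ ℝⁿ be a bounded open set, let x₀ ∈ Ω, and let α ∈ (n−2, 2). Then there exists a constant C > 0, depending only on Ω and α, such that for every v ∈ C_c^∞(Ω) one has the weighted Poincaré inequality ∫_Ω |v(x)|² dx ≤ C ∫_Ω |x − x₀|^α |∇v(x)|² dx. (Since the weighted Sobolev space H¹₀(dist^α, Ω) is defined as the closure of C_c^∞(Ω) in the weighted H¹-norm, this inequality is the content of the embedding H¹₀(dist^α, Ω) ↪ L²(Ω).) -/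
open MeasureTheory Metric

set_option maxHeartbeats 1000000


lemma young_aux (c v D s : ℝ) (hc : 0 < c) (hD : D^2 ≤ s^2) :
    -(2 * v * D) ≤ c * (v * v) + s^2 / c := by
  have h : 0 ≤ c*c*(v*v) + 2*c*v*D + s^2 := by nlinarith [sq_nonneg (c*v + D)]
  have h2 : 0 ≤ (c*c*(v*v) + 2*c*v*D + s^2) / c := div_nonneg h hc.le
  have h3 : (c*c*(v*v) + 2*c*v*D + s^2) / c = c*(v*v) + 2*v*D + s^2/c := by
    field_simp
  nlinarith [h3 ▸ h2]

lemma euclid_decomp {n : ℕ} (y : EuclideanSpace ℝ (Fin n)) :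
    y = ∑ i, y i • EuclideanSpace.single i (1:ℝ) := by
  ext j
  have : (∑ i, y i • EuclideanSpace.single i (1:ℝ)) j
      = ∑ i, (y i • EuclideanSpace.single i (1:ℝ)) j := by rw [WithLp.ofLp_sum, Finset.sum_apply]
  rw [this]
  simp [EuclideanSpace.single_apply]

section

variable {n : ℕ} (x₀ : EuclideanSpace ℝ (Fin n)) (v : EuclideanSpace ℝ (Fin n) → ℝ)
  (hv : ContDiff ℝ (⊤ : ℕ∞) v) (hvcs : HasCompactSupport v)

-- integration by parts in each coordinate, for w smooth compactly supported
lemma ibp_coord (w : EuclideanSpace ℝ (Fin n) → ℝ) (hw : ContDiff ℝ (⊤ : ℕ∞) w)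
    (hwcs : HasCompactSupport w) (i : Fin n) :
    ∫ x : EuclideanSpace ℝ (Fin n), (x i - x₀ i) * fderiv ℝ w x (EuclideanSpace.single i 1)
      = - ∫ x : EuclideanSpace ℝ (Fin n), w x := by
  have hwdiff : Differentiable ℝ w := hw.differentiable (by simp)
  have hwcont : Continuous w := hw.continuous
  have hwint : Integrable w := hwcont.integrable_of_hasCompactSupport hwcs
  have hfd : Continuous (fderiv ℝ w) := hw.continuous_fderiv (by simp)
  have hfdc : Continuous fun x => fderiv ℝ w x (EuclideanSpace.single i 1) :=
    hfd.clm_apply continuous_const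
  have hcoord : Continuous fun x : EuclideanSpace ℝ (Fin n) => x i - x₀ i :=
    ((EuclideanSpace.proj i).continuous.sub continuous_const)
  have h1 : Integrable fun x : EuclideanSpace ℝ (Fin n) =>
      (x i - x₀ i) * fderiv ℝ w x (EuclideanSpace.single i 1) := by
    apply Continuous.integrable_of_hasCompactSupport (hcoord.mul hfdc)
    exact (hwcs.fderiv_apply ℝ _).mul_left
  have h2 : Integrable fun x : EuclideanSpace ℝ (Fin n) => (x i - x₀ i) * w x := by
    apply Continuous.integrable_of_hasCompactSupport (hcoord.mul hwcont)
    exact hwcs.mul_left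
  have hF : ∀ x : EuclideanSpace ℝ (Fin n),
      HasFDerivAt (fun y : EuclideanSpace ℝ (Fin n) => y i - x₀ i)
        (EuclideanSpace.proj (𝕜 := ℝ) i) x := by
    intro x
    have h := (EuclideanSpace.proj (𝕜 := ℝ) (ι := Fin n) i).hasFDerivAt (x := x)
    exact h.sub_const (x₀ i)
  have key := integral_bilinear_hasFDerivAt_right_eq_neg_left_of_integrable
    (μ := volume) (B := ContinuousLinearMap.mul ℝ ℝ)
    (f := fun y : EuclideanSpace ℝ (Fin n) => y i - x₀ i)
    (f' := fun _ => EuclideanSpace.proj (𝕜 := ℝ) i)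
    (g := w) (g' := fun x => fderiv ℝ w x) (v := EuclideanSpace.single i 1)
    ?_ ?_ ?_ (fun x _ => hF x) (fun x _ => (hwdiff x).hasFDerivAt)
  case refine_4 =>
    have hps : (EuclideanSpace.proj (𝕜 := ℝ) i) (EuclideanSpace.single i (1:ℝ)) = 1 := by simp
    simpa only [ContinuousLinearMap.mul_apply', hps, one_mul] using key
  case refine_1 =>
    have hps : (EuclideanSpace.proj (𝕜 := ℝ) i) (EuclideanSpace.single i (1:ℝ)) = 1 := by simp
    simpa only [ContinuousLinearMap.mul_apply', hps, one_mul] using hwint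
  case refine_2 => simpa only [ContinuousLinearMap.mul_apply'] using h1
  case refine_3 => simpa only [ContinuousLinearMap.mul_apply'] using h2

end

section

variable {n : ℕ}

lemma divergence_identity (x₀ : EuclideanSpace ℝ (Fin n))
    (w : EuclideanSpace ℝ (Fin n) → ℝ) (hw : ContDiff ℝ (⊤ : ℕ∞) w)
    (hwcs : HasCompactSupport w) :
    (n : ℝ) * ∫ x : EuclideanSpace ℝ (Fin n), w x
      = - ∫ x : EuclideanSpace ℝ (Fin n), fderiv ℝ w x (x - x₀) := by
  have hfd : Continuous (fderiv ℝ w) := hw.continuous_fderiv (by simp)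
  have hInt : ∀ i : Fin n, Integrable fun x : EuclideanSpace ℝ (Fin n) =>
      (x i - x₀ i) * fderiv ℝ w x (EuclideanSpace.single i 1) := by
    intro i
    have hfdc : Continuous fun x => fderiv ℝ w x (EuclideanSpace.single i 1) :=
      hfd.clm_apply continuous_const
    have hcoord : Continuous fun x : EuclideanSpace ℝ (Fin n) => x i - x₀ i :=
      ((EuclideanSpace.proj i).continuous.sub continuous_const)
    exact Continuous.integrable_of_hasCompactSupport (hcoord.mul hfdc)
      ((hwcs.fderiv_apply ℝ _).mul_left)
  have hsum : ∀ x : EuclideanSpace ℝ (Fin n),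
      ∑ i, (x i - x₀ i) * fderiv ℝ w x (EuclideanSpace.single i 1)
        = fderiv ℝ w x (x - x₀) := by
    intro x
    conv_rhs => rw [euclid_decomp (x - x₀)]
    rw [map_sum]
    refine Finset.sum_congr rfl fun i _ => ?_
    rw [_root_.map_smul, smul_eq_mul, PiLp.sub_apply]
  have h1 : ∫ x : EuclideanSpace ℝ (Fin n), fderiv ℝ w x (x - x₀)
      = ∑ i, ∫ x : EuclideanSpace ℝ (Fin n),
          (x i - x₀ i) * fderiv ℝ w x (EuclideanSpace.single i 1) := by
    rw [← integral_finset_sum _ (fun i _ => hInt i)]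
    refine integral_congr_ae (Filter.Eventually.of_forall fun x => ?_)
    exact (hsum x).symm
  rw [h1]
  have h2 : ∀ i : Fin n, (∫ x : EuclideanSpace ℝ (Fin n),
      (x i - x₀ i) * fderiv ℝ w x (EuclideanSpace.single i 1))
        = - ∫ x : EuclideanSpace ℝ (Fin n), w x :=
    fun i => ibp_coord x₀ w hw hwcs i
  rw [Finset.sum_congr rfl (fun i _ => h2 i)]
  simp [Finset.sum_const, mul_comm]

end
/-- Weighted Poincaré inequality: for `n ∈ {2,3}`, `Ω ⊂ ℝⁿ` bounded open, `x₀ ∈ Ω` and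
`α ∈ (n-2, 2)`, there is `C > 0` (depending only on `Ω` and `α`) with
`∫_Ω v² ≤ C ∫_Ω |x-x₀|^α |∇v|²` for all `v ∈ C_c^∞(Ω)`. This is the content of the
embedding `H¹₀(dist^α, Ω) ↪ L²(Ω)`. -/
theorem weighted_poincare_dist_rpow (n : ℕ) (hn : n = 2 ∨ n = 3)
    (Ω : Set (EuclideanSpace ℝ (Fin n))) (hΩo : IsOpen Ω) (hΩb : Bornology.IsBounded Ω)
    (x₀ : EuclideanSpace ℝ (Fin n)) (hx₀ : x₀ ∈ Ω)
    (α : ℝ) (hα₁ : (n : ℝ) - 2 < α) (hα₂ : α < 2) :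
    ∃ C : ℝ, 0 < C ∧
      ∀ v : EuclideanSpace ℝ (Fin n) → ℝ,
        ContDiff ℝ (⊤ : ℕ∞) v → HasCompactSupport v → tsupport v ⊆ Ω →
        ∫ x in Ω, (v x) ^ 2 ≤ C * ∫ x in Ω, ‖x - x₀‖ ^ α * ‖gradient v x‖ ^ 2 := by
  
  obtain ⟨R₀, hR₀⟩ := (Metric.isBounded_iff_subset_closedBall x₀).1 hΩb
  set R : ℝ := max R₀ 1 with hRdef
  have hR1 : (1:ℝ) ≤ R := le_max_right _ _
  have hRpos : (0:ℝ) < R := lt_of_lt_of_le one_pos hR1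
  have hΩR : Ω ⊆ Metric.closedBall x₀ R :=
    hR₀.trans (Metric.closedBall_subset_closedBall (le_max_left _ _))
  have hn2 : (2:ℝ) ≤ (n:ℝ) := by rcases hn with h | h <;> rw [h] <;> norm_num
  have hnpos : (0:ℝ) < (n:ℝ) := by linarith
  have hαpos : 0 < α := by linarith
  have h2α : 0 ≤ 2 - α := by linarith
  refine ⟨4 / (n:ℝ)^2 * R ^ (2 - α), by positivity, ?_⟩
  intro v hv hvcs hvsupp
  have hvdiff : Differentiable ℝ v := hv.differentiable (by simp)
  set w : EuclideanSpace ℝ (Fin n) → ℝ := fun x => v x * v x with hwdef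
  have hwc : ContDiff ℝ (⊤ : ℕ∞) w := hv.mul hv
  have hwcs : HasCompactSupport w := hvcs.mul_left
  have hwcont : Continuous w := hwc.continuous
  have hwint : Integrable w := hwcont.integrable_of_hasCompactSupport hwcs
  have hgradnorm : ∀ x, ‖gradient v x‖ = ‖fderiv ℝ v x‖ := fun x =>
    (InnerProductSpace.toDual ℝ _).symm.norm_map (fderiv ℝ v x)
  have hfv0 : ∀ x, x ∉ Ω → fderiv ℝ v x = 0 := by
    intro x hx
    have hxs : x ∉ Function.support (fderiv ℝ v) :=
      fun h => hx (hvsupp (support_fderiv_subset ℝ h))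
    simpa [Function.notMem_support] using hxs
  -- derivative of w
  have hfwx : ∀ x y, fderiv ℝ w x y = 2 * v x * fderiv ℝ v x y := by
    intro x y
    rw [hwdef]
    rw [fderiv_fun_mul (hvdiff x) (hvdiff x)]
    simp [smul_eq_mul]
    ring
  -- integrability facts
  have hfdvcont : Continuous (fderiv ℝ v) := hv.continuous_fderiv (by simp)
  have hIcont : Continuous fun x => fderiv ℝ w x (x - x₀) :=
    (hwc.continuous_fderiv (by simp)).clm_apply (continuous_id.sub continuous_const)
  have hIcs : HasCompactSupport fun x => fderiv ℝ w x (x - x₀) := by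
    apply (hwcs.fderiv (𝕜 := ℝ)).mono'
    intro x hx
    apply subset_closure
    simp only [Function.mem_support] at hx ⊢
    intro h0
    exact hx (by rw [h0]; simp)
  have hIint : Integrable (fun x => fderiv ℝ w x (x - x₀)) :=
    hIcont.integrable_of_hasCompactSupport hIcs
  have hscont : Continuous fun x => (‖x - x₀‖ * ‖fderiv ℝ v x‖)^2 :=
    ((continuous_id.sub continuous_const).norm.mul hfdvcont.norm).pow 2
  have hscs : HasCompactSupport fun x => (‖x - x₀‖ * ‖fderiv ℝ v x‖)^2 := by
    apply (hvcs.fderiv (𝕜 := ℝ)).mono'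
    intro x hx
    apply subset_closure
    simp only [Function.mem_support] at hx ⊢
    intro h0
    exact hx (by rw [h0]; simp)
  have hsint : Integrable (fun x => (‖x - x₀‖ * ‖fderiv ℝ v x‖)^2) :=
    hscont.integrable_of_hasCompactSupport hscs
  have hwcontα : Continuous fun x : EuclideanSpace ℝ (Fin n) => ‖x - x₀‖ ^ α :=
    (Real.continuous_rpow_const hαpos.le).comp (continuous_id.sub continuous_const).norm
  have hRHScont : Continuous fun x : EuclideanSpace ℝ (Fin n) =>
      ‖x - x₀‖ ^ α * ‖fderiv ℝ v x‖^2 := hwcontα.mul (hfdvcont.norm.pow 2)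
  have hRHScs : HasCompactSupport fun x : EuclideanSpace ℝ (Fin n) =>
      ‖x - x₀‖ ^ α * ‖fderiv ℝ v x‖^2 := by
    apply (hvcs.fderiv (𝕜 := ℝ)).mono'
    intro x hx
    apply subset_closure
    simp only [Function.mem_support] at hx ⊢
    intro h0
    exact hx (by rw [h0]; simp)
  have hRHSint : Integrable (fun x => ‖x - x₀‖ ^ α * ‖fderiv ℝ v x‖^2) :=
    hRHScont.integrable_of_hasCompactSupport hRHScs
  -- main identity + Young estimate
  have hkey := divergence_identity x₀ w hwc hwcs
  have hpt1 : ∀ x, -(fderiv ℝ w x (x - x₀))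
      ≤ (n:ℝ)/2 * w x + (‖x - x₀‖ * ‖fderiv ℝ v x‖)^2 / ((n:ℝ)/2) := by
    intro x
    have hD : |fderiv ℝ v x (x - x₀)| ≤ ‖fderiv ℝ v x‖ * ‖x - x₀‖ := by
      simpa [Real.norm_eq_abs] using (fderiv ℝ v x).le_opNorm (x - x₀)
    have hD2 : (fderiv ℝ v x (x - x₀))^2 ≤ (‖x - x₀‖ * ‖fderiv ℝ v x‖)^2 := by
      rw [← sq_abs]
      apply pow_le_pow_left₀ (abs_nonneg _)
      linarith [hD]
    have := young_aux ((n:ℝ)/2) (v x) (fderiv ℝ v x (x - x₀))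
      (‖x - x₀‖ * ‖fderiv ℝ v x‖) (by linarith) hD2
    calc -(fderiv ℝ w x (x - x₀)) = -(2 * v x * fderiv ℝ v x (x - x₀)) := by rw [hfwx]
      _ ≤ (n:ℝ)/2 * (v x * v x) + (‖x - x₀‖ * ‖fderiv ℝ v x‖)^2 / ((n:ℝ)/2) := this
      _ = (n:ℝ)/2 * w x + (‖x - x₀‖ * ‖fderiv ℝ v x‖)^2 / ((n:ℝ)/2) := by rw [hwdef]
  have hIneq1 : (n:ℝ) * ∫ x, w x
      ≤ (n:ℝ)/2 * (∫ x, w x) + (∫ x, (‖x - x₀‖ * ‖fderiv ℝ v x‖)^2) / ((n:ℝ)/2) := by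
    rw [hkey, ← integral_neg]
    calc ∫ x, -(fderiv ℝ w x (x - x₀))
        ≤ ∫ x, ((n:ℝ)/2 * w x + (‖x - x₀‖ * ‖fderiv ℝ v x‖)^2 / ((n:ℝ)/2)) := by
          apply integral_mono hIint.neg ((hwint.const_mul _).add (hsint.div_const _))
          exact fun x => hpt1 x
      _ = (n:ℝ)/2 * (∫ x, w x) + (∫ x, (‖x - x₀‖ * ‖fderiv ℝ v x‖)^2) / ((n:ℝ)/2) := by
          rw [integral_add (hwint.const_mul _) (hsint.div_const _),
            integral_const_mul, integral_div]
  have hIw : ∫ x, w x ≤ 4/(n:ℝ)^2 * ∫ x, (‖x - x₀‖ * ‖fderiv ℝ v x‖)^2 := by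
    set I := ∫ x, w x
    set S := ∫ x, (‖x - x₀‖ * ‖fderiv ℝ v x‖)^2
    have h2 : (n:ℝ)/2 * I ≤ S/((n:ℝ)/2) := by linarith
    have hne : (n:ℝ) ≠ 0 := ne_of_gt hnpos
    calc I = (2/(n:ℝ)) * ((n:ℝ)/2 * I) := by field_simp
      _ ≤ (2/(n:ℝ)) * (S/((n:ℝ)/2)) := by
          apply mul_le_mul_of_nonneg_left h2 (by positivity)
      _ = 4/(n:ℝ)^2 * S := by field_simp; ring
  -- weight comparison
  have hpt2 : ∀ x, (‖x - x₀‖ * ‖fderiv ℝ v x‖)^2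
      ≤ R^(2-α) * (‖x - x₀‖ ^ α * ‖fderiv ℝ v x‖^2) := by
    intro x
    by_cases hx : x ∈ Ω
    · have hxR : ‖x - x₀‖ ≤ R := by
        have := hΩR hx
        rwa [Metric.mem_closedBall, dist_eq_norm] at this
      have h0 : (0:ℝ) ≤ ‖x - x₀‖ := norm_nonneg _
      have hb : ‖x - x₀‖^(2:ℝ) ≤ R^(2-α) * ‖x - x₀‖^α := by
        rcases eq_or_lt_of_le h0 with h|h
        · rw [← h]
          rw [Real.zero_rpow (by norm_num), Real.zero_rpow (ne_of_gt hαpos)]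
          simp
        · calc ‖x - x₀‖^(2:ℝ)
              = ‖x - x₀‖^(2-α) * ‖x - x₀‖^α := by rw [← Real.rpow_add h]; norm_num
          _ ≤ R^(2-α) * ‖x - x₀‖^α :=
              mul_le_mul_of_nonneg_right (Real.rpow_le_rpow h0 hxR h2α)
                (Real.rpow_nonneg h0 _)
      calc (‖x - x₀‖ * ‖fderiv ℝ v x‖)^2
            = ‖x - x₀‖^(2:ℝ) * ‖fderiv ℝ v x‖^2 := by
              rw [mul_pow, ← Real.rpow_natCast ‖x - x₀‖ 2]; norm_num
        _ ≤ (R^(2-α) * ‖x - x₀‖^α) * ‖fderiv ℝ v x‖^2 :=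
            mul_le_mul_of_nonneg_right hb (by positivity)
        _ = R^(2-α) * (‖x - x₀‖^α * ‖fderiv ℝ v x‖^2) := by ring
    · rw [hfv0 x hx]
      simp
  -- set integral conversions
  have hL : ∫ x in Ω, (v x)^2 = ∫ x, w x := by
    have hfun : (fun x => (v x)^2) = w := funext fun x => by rw [hwdef]; ring
    rw [hfun]
    apply setIntegral_eq_integral_of_forall_compl_eq_zero
    intro x hx
    have hv0 : v x = 0 :=
      image_eq_zero_of_notMem_tsupport (fun h => hx (hvsupp h))
    simp [hwdef, hv0]
  have hRint' : ∫ x in Ω, ‖x - x₀‖ ^ α * ‖gradient v x‖^2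
      = ∫ x, ‖x - x₀‖ ^ α * ‖fderiv ℝ v x‖^2 := by
    simp_rw [hgradnorm]
    apply setIntegral_eq_integral_of_forall_compl_eq_zero
    intro x hx
    rw [hfv0 x hx]
    simp
  calc ∫ x in Ω, (v x)^2 = ∫ x, w x := hL
    _ ≤ 4/(n:ℝ)^2 * ∫ x, (‖x - x₀‖ * ‖fderiv ℝ v x‖)^2 := hIw
    _ ≤ 4/(n:ℝ)^2 * (R^(2-α) * ∫ x, ‖x - x₀‖ ^ α * ‖fderiv ℝ v x‖^2) := by
        apply mul_le_mul_of_nonneg_left _ (by positivity)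
        rw [← integral_const_mul]
        exact integral_mono hsint (hRHSint.const_mul _) (fun x => hpt2 x)
    _ = (4/(n:ℝ)^2 * R^(2-α)) * ∫ x, ‖x - x₀‖ ^ α * ‖fderiv ℝ v x‖^2 := by ring
    _ = 4/(n:ℝ)^2 * R^(2-α) * ∫ x in Ω, ‖x - x₀‖ ^ α * ‖gradient v x‖^2 := by
        rw [hRint']
end

section
/- Let n ≥ 2, let Ω ⊂ ℝⁿ be a bounded open set, let x₀ ∈ Ω, and let α ∈ (n−2, n). Then there exists a constant C > 0, depending on Ω, x₀ and α, such that for all v ∈ C_c^∞(Ω): |v(x₀)|² ≤ C ∫_Ω |x − x₀|^{−α} |∇v(x)|² dx. In other words, the Dirac delta δ_{x₀} extends to a bounded linear functional on the weighted space H¹₀(dist^{−α}, Ω), defined as the closure of C_c^∞(Ω) in the norm (∫_Ω |x − x₀|^{−α}|∇v|²)^{1/2}. -/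
open MeasureTheory Metric Set
open scoped ENNReal NNReal

/-- Local abbreviation for the Euclidean space. -/
private noncomputable abbrev Esp (n : ℕ) : Type := EuclideanSpace ℝ (Fin n)

/-- Real power with a fixed (real) exponent is measurable. -/
private lemma measurable_rpow_const_aux (c : ℝ) : Measurable fun x : ℝ => x ^ c := by
  have hfun : (fun x : ℝ => x ^ c) = fun x =>
      if x < 0 then Real.exp (Real.log x * c) * Real.cos (c * Real.pi)
      else if x = 0 then (if c = 0 then 1 else 0)
      else Real.exp (Real.log x * c) := by
    funext x
    rcases lt_trichotomy x 0 with h | h | h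
    · rw [if_pos h, Real.rpow_def_of_neg h]
    · subst h
      rw [if_neg (lt_irrefl _), if_pos rfl]
      rcases eq_or_ne c 0 with hc | hc
      · simp [hc]
      · simp [Real.zero_rpow hc, hc]
    · rw [if_neg (not_lt.mpr h.le), if_neg h.ne', Real.rpow_def_of_pos h]
  rw [hfun]
  refine Measurable.ite (measurableSet_lt measurable_id measurable_const)
    (((Real.measurable_log.mul_const c).exp).mul_const _) ?_
  exact Measurable.ite (measurableSet_eq) measurable_const
    ((Real.measurable_log.mul_const c).exp)

/-- For `n ≥ 2`, `Ω ⊂ ℝⁿ` bounded open, `x₀ ∈ Ω` and `α ∈ (n-2, n)`, the Dirac delta at `x₀`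
is bounded on the weighted space `H¹₀(dist^{-α}, Ω)`: there is `C > 0` with
`|v(x₀)|² ≤ C ∫_Ω |x-x₀|^{-α} |∇v|²` for all `v ∈ C_c^∞(Ω)`. -/
theorem dirac_bounded_on_weighted_H10 (n : ℕ) (hn : 2 ≤ n)
    (Ω : Set (EuclideanSpace ℝ (Fin n))) (hΩo : IsOpen Ω) (hΩb : Bornology.IsBounded Ω)
    (x₀ : EuclideanSpace ℝ (Fin n)) (hx₀ : x₀ ∈ Ω)
    (α : ℝ) (hα₁ : (n : ℝ) - 2 < α) (hα₂ : α < n) :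
    ∃ C : ℝ, 0 < C ∧
      ∀ v : EuclideanSpace ℝ (Fin n) → ℝ,
        ContDiff ℝ (⊤ : ℕ∞) v → HasCompactSupport v → tsupport v ⊆ Ω →
        (v x₀) ^ 2 ≤ C * ∫ x in Ω, ‖x - x₀‖ ^ (-α) * ‖gradient v x‖ ^ 2 := by
  classical
  have hn1 : (1:ℝ) ≤ (n:ℝ) := by exact_mod_cast Nat.one_le_of_lt hn
  haveI : Nontrivial (Esp n) := by
    have : Module.finrank ℝ (Esp n) = n := finrank_euclideanSpace_fin
    exact Module.nontrivial_of_finrank_pos (R := ℝ) (by omega : 0 < Module.finrank ℝ (Esp n))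
  -- radius
  obtain ⟨r0, hr0⟩ := hΩb.subset_closedBall x₀
  set R : ℝ := max r0 0 + 1 with hRdef
  have hR0 : 0 < R := by positivity
  have hΩR : Ω ⊆ ball x₀ R := fun x hx => by
    have h := hr0 hx
    rw [mem_closedBall] at h
    rw [mem_ball]
    have : r0 ≤ max r0 0 := le_max_left _ _
    linarith
  -- sphere measure
  set σ : ℝ≥0∞ := (volume : Measure (Esp n)).toSphere Set.univ with hσdef
  have hσ_fin : σ ≠ ⊤ := measure_ne_top _ _
  have hσ_pos : σ ≠ 0 := by
    rw [hσdef, Measure.toSphere_apply_univ]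
    refine mul_ne_zero ?_ ?_
    · simp [finrank_euclideanSpace_fin]; omega
    · exact (measure_ball_pos _ _ one_pos).ne'
  -- exponents
  set β : ℝ := α + 1 - n with hβdef
  set γ : ℝ := (n:ℝ) - 1 - α with hγdef
  have hβ : -1 < β := by rw [hβdef]; linarith
  have hγ : -1 < γ := by rw [hγdef]; linarith
  -- finiteness of one-dimensional weight integrals
  have hK : ∀ δ : ℝ, -1 < δ → ∫⁻ r in Ioo (0:ℝ) R, ENNReal.ofReal (r ^ δ) ∂volume ≠ ⊤ := by
    intro δ hδ
    have h1 : IntegrableOn (fun r : ℝ => r ^ δ) (Ioc 0 R) volume :=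
      (intervalIntegrable_iff_integrableOn_Ioc_of_le hR0.le).mp
        (intervalIntegral.intervalIntegrable_rpow' hδ)
    exact ((h1.mono_set Ioo_subset_Ioc_self).setLIntegral_lt_top).ne
  set K1 : ℝ≥0∞ := ∫⁻ r in Ioo (0:ℝ) R, ENNReal.ofReal (r ^ β) with hK1def
  set K2 : ℝ≥0∞ := ∫⁻ r in Ioo (0:ℝ) R, ENNReal.ofReal (r ^ γ) with hK2def
  have hK1 : K1 ≠ ⊤ := hK β hβ
  have hK2 : K2 ≠ ⊤ := hK γ hγ
  refine ⟨(K1 * σ⁻¹).toReal + 1, by positivity, ?_⟩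
  intro v hv hvc hvs
  -- basic facts about v
  have hvdiff : Differentiable ℝ v := hv.differentiable (by simp)
  have hgv0 : ∀ x, x ∉ tsupport v → gradient v x = 0 := by
    intro x hx
    have : fderiv ℝ v x = 0 :=
      Function.notMem_support.mp (fun h => hx (support_fderiv_subset ℝ h))
    simp only [gradient, this, map_zero]
  have hgvcont : Continuous (gradient v) := by
    have : gradient v = fun x => (InnerProductSpace.toDual ℝ (Esp n)).symm (fderiv ℝ v x) := rfl
    rw [this]
    exact (LinearIsometryEquiv.continuous _).comp (hv.continuous_fderiv (by simp))
  obtain ⟨M, hM⟩ := (HasCompactSupport.intro hvc fun x hx => hgv0 x hx :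
      HasCompactSupport (gradient v)).exists_bound_of_continuous hgvcont
  -- translated function w
  set w : (Esp n) → ℝ := fun y => v (x₀ + y) with hwdef
  have hw : ContDiff ℝ (⊤ : ℕ∞) w := hv.comp (contDiff_const.add contDiff_id)
  have hfd : ∀ y, fderiv ℝ w y = fderiv ℝ v (x₀ + y) := by
    intro y
    have h1 : HasFDerivAt (fun y : (Esp n) => x₀ + y) (ContinuousLinearMap.id ℝ (Esp n)) y :=
      (hasFDerivAt_id y).const_add x₀
    have h2 := ((hvdiff (x₀ + y)).hasFDerivAt).comp y h1
    exact h2.fderiv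
  have hgw : ∀ y, gradient w y = gradient v (x₀ + y) := by
    intro y; simp only [gradient, hfd y]
  have hgwnorm : ∀ y, ‖fderiv ℝ w y‖ = ‖gradient w y‖ := by
    intro y
    simp only [gradient]
    exact (LinearIsometryEquiv.norm_map _ _).symm
  have hgwc : Continuous (gradient w) := by
    have : gradient w = fun y => gradient v (x₀ + y) := funext hgw
    rw [this]
    exact hgvcont.comp (continuous_const.add continuous_id)
  have hMw : ∀ y, ‖gradient w y‖ ≤ M := fun y => by rw [hgw]; exact hM _
  have hM0 : 0 ≤ M := le_trans (norm_nonneg _) (hMw 0)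
  have hzero : ∀ y : (Esp n), R ≤ ‖y‖ → w y = 0 ∧ gradient w y = 0 := by
    intro y hy
    have hxΩ : x₀ + y ∉ Ω := by
      intro h
      have := hΩR h
      rw [mem_ball, dist_eq_norm, add_sub_cancel_left] at this
      linarith
    have hxs : x₀ + y ∉ tsupport v := fun h => hxΩ (hvs h)
    exact ⟨(image_eq_zero_of_notMem_tsupport hxs : v (x₀ + y) = 0), by rw [hgw]; exact hgv0 _ hxs⟩
  -- the weight function
  set G : (Esp n) → ℝ := fun y => ‖y‖ ^ (-α) * ‖gradient w y‖ ^ 2 with hGdef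
  have hGnn : ∀ y, 0 ≤ G y := fun y => by positivity
  have hGmeas : Measurable G := by
    have m1 : Measurable fun y : (Esp n) => ‖y‖ ^ (-α) :=
      (measurable_rpow_const_aux (-α)).comp measurable_norm
    exact m1.mul ((hgwc.norm.pow 2).measurable)
  set L : ℝ≥0∞ := ∫⁻ y, ENNReal.ofReal (G y) with hLdef
  -- the integral in the statement equals L.toReal
  have hIL : ∫ x in Ω, ‖x - x₀‖ ^ (-α) * ‖gradient v x‖ ^ 2 = L.toReal := by
    have hFmeas : Measurable fun x : (Esp n) => ‖x - x₀‖ ^ (-α) * ‖gradient v x‖ ^ 2 :=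
      ((measurable_rpow_const_aux (-α)).comp (measurable_id.sub measurable_const).norm).mul
        ((hgvcont.norm.pow 2).measurable)
    rw [setIntegral_eq_integral_of_forall_compl_eq_zero (fun x hx => by
      rw [hgv0 x (fun h => hx (hvs h))]; simp)]
    rw [integral_eq_lintegral_of_nonneg_ae (ae_of_all _ fun x => by positivity)
      hFmeas.aestronglyMeasurable]
    congr 1
    rw [hLdef, ← lintegral_add_left_eq_self
      (fun x => ENNReal.ofReal (‖x - x₀‖ ^ (-α) * ‖gradient v x‖ ^ 2)) x₀]
    refine lintegral_congr fun y => ?_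
    rw [hGdef]
    simp only [add_sub_cancel_left, hgw y]
  -- spherical decomposition
  set J : sphere (0:(Esp n)) 1 → ℝ≥0∞ := fun ω =>
    ∫⁻ r in Ioi (0:ℝ), ENNReal.ofReal (r ^ (n-1)) * ENNReal.ofReal (G (r • (ω:(Esp n)))) with hJdef
  have hcont_smul : Continuous fun p : sphere (0:(Esp n)) 1 × Ioi (0:ℝ) => (p.2 : ℝ) • (p.1 : (Esp n)) :=
    (continuous_subtype_val.comp continuous_snd).smul
      (continuous_subtype_val.comp continuous_fst)
  have hfmeas : Measurable fun p : sphere (0:(Esp n)) 1 × Ioi (0:ℝ) =>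
      ENNReal.ofReal (G ((p.2 : ℝ) • (p.1 : (Esp n)))) :=
    (hGmeas.comp hcont_smul.measurable).ennreal_ofReal
  have hL : L = ∫⁻ ω, J ω ∂((volume : Measure (Esp n)).toSphere) := by
    have hdim : Module.finrank ℝ (Esp n) = n := finrank_euclideanSpace_fin
    calc L = ∫⁻ y in ({0}ᶜ : Set (Esp n)), ENNReal.ofReal (G y) := by
            rw [restrict_compl_singleton]
      _ = ∫⁻ (x : ({0}ᶜ : Set (Esp n))), ENNReal.ofReal (G x.1)
            ∂((volume : Measure (Esp n)).comap Subtype.val) :=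
            (lintegral_subtype_comap (measurableSet_singleton 0).compl _).symm
      _ = ∫⁻ (x : ({0}ᶜ : Set (Esp n))),
            (fun p : sphere (0:(Esp n)) 1 × Ioi (0:ℝ) => ENNReal.ofReal (G ((p.2:ℝ) • (p.1:(Esp n)))))
            (homeomorphUnitSphereProd (Esp n) x) ∂((volume : Measure (Esp n)).comap Subtype.val) := by
            refine lintegral_congr fun x => ?_
            have hx : (x : (Esp n)) ≠ 0 := x.2
            simp only [homeomorphUnitSphereProd_apply_fst_coe,
              homeomorphUnitSphereProd_apply_snd_coe]
            rw [smul_inv_smul₀ (norm_ne_zero_iff.2 hx)]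
      _ = ∫⁻ p, ENNReal.ofReal (G ((p.2:ℝ) • (p.1:(Esp n))))
            ∂((volume : Measure (Esp n)).toSphere.prod
              (Measure.volumeIoiPow (Module.finrank ℝ (Esp n) - 1))) :=
            (Measure.measurePreserving_homeomorphUnitSphereProd volume).lintegral_comp hfmeas
      _ = ∫⁻ ω, ∫⁻ r', ENNReal.ofReal (G ((r':ℝ) • (ω:(Esp n))))
            ∂(Measure.volumeIoiPow (Module.finrank ℝ (Esp n) - 1)) ∂((volume : Measure (Esp n)).toSphere) :=
            lintegral_prod _ hfmeas.aemeasurable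
      _ = ∫⁻ ω, J ω ∂((volume : Measure (Esp n)).toSphere) := by
            refine lintegral_congr fun ω => ?_
            rw [hJdef, Measure.volumeIoiPow,
              lintegral_withDensity_eq_lintegral_mul _
                (by exact (measurable_subtype_coe.pow_const _).ennreal_ofReal)
                (by exact (hGmeas.comp
                  (continuous_subtype_val.smul continuous_const).measurable).ennreal_ofReal)]
            rw [hdim]
            exact lintegral_subtype_comap measurableSet_Ioi
              (fun r => ENNReal.ofReal (r ^ (n-1)) * ENNReal.ofReal (G (r • (ω:(Esp n)))))
  -- identification of J integrand on (0, R)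
  have hJint : ∀ (ω : sphere (0:(Esp n)) 1), ∀ r : ℝ, 0 < r →
      ENNReal.ofReal (r ^ (n-1)) * ENNReal.ofReal (G (r • (ω:(Esp n))))
        = ENNReal.ofReal (r ^ γ * ‖gradient w (r • (ω:(Esp n)))‖ ^ 2) := by
    intro ω r hr
    have hω : ‖(ω:(Esp n))‖ = 1 := mem_sphere_zero_iff_norm.mp ω.2
    have hnorm : ‖r • (ω:(Esp n))‖ = r := by
      rw [norm_smul, hω, mul_one, Real.norm_eq_abs, abs_of_pos hr]
    rw [hGdef]
    simp only [hnorm]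
    rw [← ENNReal.ofReal_mul (by positivity)]
    congr 1
    rw [← mul_assoc]
    congr 1
    rw [← Real.rpow_natCast r (n-1), ← Real.rpow_add hr, hγdef]
    congr 1
    have : ((n - 1 : ℕ) : ℝ) = (n:ℝ) - 1 := by
      have : (1:ℕ) ≤ n := by omega
      push_cast [Nat.cast_sub this]
      ring
    rw [this]; ring
  -- per-ray estimate
  have hray : ∀ ω : sphere (0:(Esp n)) 1, ENNReal.ofReal ((v x₀)^2) ≤ K1 * J ω := by
    intro ω
    have hω : ‖(ω:(Esp n))‖ = 1 := mem_sphere_zero_iff_norm.mp ω.2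
    set g : ℝ → ℝ := fun r => ‖gradient w (r • (ω:(Esp n)))‖ with hgdef
    have hgcont : Continuous g :=
      (hgwc.comp (continuous_id.smul continuous_const)).norm
    have hgnn : ∀ r, 0 ≤ g r := fun r => norm_nonneg _
    -- FTC
    set φ' : ℝ → ℝ := fun r => fderiv ℝ w (r • (ω:(Esp n))) (ω:(Esp n)) with hφ'def
    have hφ'cont : Continuous φ' := by
      have h1 : Continuous fun r : ℝ => fderiv ℝ w (r • (ω:(Esp n))) :=
        (hw.continuous_fderiv (by simp)).comp (continuous_id.smul continuous_const)
      exact ((ContinuousLinearMap.apply ℝ ℝ ((ω:(Esp n)))).continuous).comp h1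
    have hφd : ∀ r : ℝ, HasDerivAt (fun r : ℝ => w (r • (ω:(Esp n)))) (φ' r) r := by
      intro r
      have hc : HasDerivAt (fun r : ℝ => r • (ω:(Esp n))) ((ω:(Esp n))) r := by
        simpa using (hasDerivAt_id r).smul_const ((ω:(Esp n)))
      exact ((hw.differentiable (by simp) _).hasFDerivAt).comp_hasDerivAt r hc
    have hFTC : ∫ r in (0:ℝ)..R, φ' r = w (R • (ω:(Esp n))) - w ((0:ℝ) • (ω:(Esp n))) :=
      intervalIntegral.integral_eq_sub_of_hasDerivAt (fun t _ => hφd t)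
        (hφ'cont.intervalIntegrable 0 R)
    have hwR : w (R • (ω:(Esp n))) = 0 := by
      refine (hzero _ ?_).1
      rw [norm_smul, hω, mul_one, Real.norm_eq_abs, abs_of_pos hR0]
    have hw0 : w ((0:ℝ) • (ω:(Esp n))) = v x₀ := by
      rw [zero_smul, hwdef]; simp
    -- |v x₀| ≤ ∫ g
    have h1 : |v x₀| ≤ ∫ r in (0:ℝ)..R, g r := by
      have e1 : v x₀ = -(∫ r in (0:ℝ)..R, φ' r) := by rw [hFTC, hwR, hw0]; ring
      rw [e1, abs_neg]
      calc |∫ r in (0:ℝ)..R, φ' r| ≤ ∫ r in (0:ℝ)..R, |φ' r| :=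
            intervalIntegral.abs_integral_le_integral_abs hR0.le
        _ ≤ ∫ r in (0:ℝ)..R, g r := by
            refine intervalIntegral.integral_mono_on hR0.le
              (hφ'cont.abs.intervalIntegrable 0 R) (hgcont.intervalIntegrable 0 R)
              (fun r _ => ?_)
            calc |φ' r| ≤ ‖fderiv ℝ w (r • (ω:(Esp n)))‖ * ‖(ω:(Esp n))‖ :=
                  (fderiv ℝ w (r • (ω:(Esp n)))).le_opNorm _
              _ = g r := by rw [hω, mul_one, hgwnorm]
    have hgInt : IntegrableOn g (Ioo 0 R) volume :=
      (hgcont.integrableOn_Icc).mono_set Ioo_subset_Icc_self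
    have h2 : ENNReal.ofReal (|v x₀|) ≤ ∫⁻ r in Ioo (0:ℝ) R, ENNReal.ofReal (g r) := by
      refine le_trans (ENNReal.ofReal_le_ofReal h1) ?_
      rw [intervalIntegral.integral_of_le hR0.le, integral_Ioc_eq_integral_Ioo,
        ofReal_integral_eq_lintegral_ofReal hgInt (ae_of_all _ fun r => hgnn r)]
    -- Hölder
    set F1 : ℝ → ℝ≥0∞ := fun r => ENNReal.ofReal (r ^ (β/2)) with hF1def
    set F2 : ℝ → ℝ≥0∞ := fun r => ENNReal.ofReal (r ^ (γ/2) * g r) with hF2def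
    have hsplit : ∫⁻ r in Ioo (0:ℝ) R, ENNReal.ofReal (g r)
        = ∫⁻ r in Ioo (0:ℝ) R, (F1 * F2) r := by
      refine setLIntegral_congr_fun measurableSet_Ioo (fun r hr => ?_)
      simp only [Pi.mul_apply, hF1def, hF2def]
      rw [← ENNReal.ofReal_mul (Real.rpow_nonneg hr.1.le _), ← mul_assoc,
        ← Real.rpow_add hr.1]
      norm_num
      rw [show β/2 + γ/2 = 0 by rw [hβdef, hγdef]; ring, Real.rpow_zero, one_mul]
    have hmF1 : AEMeasurable F1 (volume.restrict (Ioo (0:ℝ) R)) :=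
      ((measurable_rpow_const_aux (β/2)).ennreal_ofReal).aemeasurable
    have hmF2 : AEMeasurable F2 (volume.restrict (Ioo (0:ℝ) R)) :=
      (((measurable_rpow_const_aux (γ/2)).mul hgcont.measurable).ennreal_ofReal).aemeasurable
    have holder := ENNReal.lintegral_mul_le_Lp_mul_Lq (volume.restrict (Ioo (0:ℝ) R))
      Real.HolderConjugate.two_two hmF1 hmF2
    have eval1 : ∫⁻ r in Ioo (0:ℝ) R, F1 r ^ (2:ℝ) = K1 := by
      refine setLIntegral_congr_fun measurableSet_Ioo (fun r hr => ?_)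
      simp only [hF1def]
      rw [ENNReal.ofReal_rpow_of_nonneg (Real.rpow_nonneg hr.1.le _) (by norm_num : (0:ℝ) ≤ 2),
        ← Real.rpow_mul hr.1.le]
      norm_num
    have eval2 : ∫⁻ r in Ioo (0:ℝ) R, F2 r ^ (2:ℝ) ≤ J ω := by
      have e2 : ∫⁻ r in Ioo (0:ℝ) R, F2 r ^ (2:ℝ)
          = ∫⁻ r in Ioo (0:ℝ) R,
              ENNReal.ofReal (r ^ (n-1)) * ENNReal.ofReal (G (r • (ω:(Esp n)))) := by
        refine setLIntegral_congr_fun measurableSet_Ioo (fun r hr => ?_)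
        simp only [hF2def]
        rw [ENNReal.ofReal_rpow_of_nonneg (mul_nonneg (Real.rpow_nonneg hr.1.le _) (hgnn r))
            (by norm_num : (0:ℝ) ≤ 2),
          Real.mul_rpow (Real.rpow_nonneg hr.1.le _) (hgnn r),
          ← Real.rpow_mul hr.1.le, hJint ω r hr.1]
        congr 2
        · norm_num
        · rw [show (2:ℝ) = ((2:ℕ):ℝ) by norm_num, Real.rpow_natCast]
      rw [e2, hJdef]
      exact lintegral_mono_set (fun r hr => hr.1)
    have hcs : ENNReal.ofReal |v x₀| ≤ K1 ^ (1/2 : ℝ) * (J ω) ^ (1/2 : ℝ) := by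
      refine (h2.trans (le_of_eq hsplit)).trans (holder.trans ?_)
      rw [eval1]
      exact mul_le_mul_right (ENNReal.rpow_le_rpow eval2 (by norm_num)) _
    calc ENNReal.ofReal ((v x₀)^2) = (ENNReal.ofReal |v x₀|) ^ (2:ℝ) := by
          rw [ENNReal.ofReal_rpow_of_nonneg (abs_nonneg _) (by norm_num : (0:ℝ) ≤ 2)]
          congr 1
          rw [show (2:ℝ) = ((2:ℕ):ℝ) by norm_num, Real.rpow_natCast, sq_abs]
      _ ≤ (K1 ^ (1/2:ℝ) * (J ω) ^ (1/2:ℝ)) ^ (2:ℝ) :=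
          ENNReal.rpow_le_rpow hcs (by norm_num)
      _ = K1 * J ω := by
          rw [ENNReal.mul_rpow_of_nonneg _ _ (by norm_num : (0:ℝ) ≤ 2),
            ← ENNReal.rpow_mul, ← ENNReal.rpow_mul]
          norm_num
  -- bound on J
  have hJbound : ∀ ω : sphere (0:(Esp n)) 1, J ω ≤ ENNReal.ofReal (M^2) * K2 := by
    intro ω
    have hω : ‖(ω:(Esp n))‖ = 1 := mem_sphere_zero_iff_norm.mp ω.2
    have hsub : Ioi (0:ℝ) ⊆ Ioo 0 R ∪ Ici R := by
      intro r hr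
      rcases lt_or_ge r R with h | h
      · exact Or.inl ⟨hr, h⟩
      · exact Or.inr h
    have hIci : ∫⁻ r in Ici R,
        ENNReal.ofReal (r ^ (n-1)) * ENNReal.ofReal (G (r • (ω:(Esp n)))) = 0 := by
      rw [setLIntegral_congr_fun measurableSet_Ici (fun r hr => ?_), lintegral_zero]
      have hrR : R ≤ r := hr
      have hnorm : R ≤ ‖r • (ω:(Esp n))‖ := by
        rw [norm_smul, hω, mul_one, Real.norm_eq_abs, abs_of_pos (hR0.trans_le hrR)]
        exact hrR
      have := (hzero _ hnorm).2
      rw [hGdef]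
      simp [this]
    have hIoo : ∫⁻ r in Ioo (0:ℝ) R,
        ENNReal.ofReal (r ^ (n-1)) * ENNReal.ofReal (G (r • (ω:(Esp n))))
          ≤ ENNReal.ofReal (M^2) * K2 := by
      have e3 : ∫⁻ r in Ioo (0:ℝ) R,
          ENNReal.ofReal (r ^ (n-1)) * ENNReal.ofReal (G (r • (ω:(Esp n))))
            = ∫⁻ r in Ioo (0:ℝ) R,
                ENNReal.ofReal (r ^ γ * ‖gradient w (r • (ω:(Esp n)))‖ ^ 2) :=
        setLIntegral_congr_fun measurableSet_Ioo (fun r hr => hJint ω r hr.1)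
      rw [e3]
      calc ∫⁻ r in Ioo (0:ℝ) R, ENNReal.ofReal (r ^ γ * ‖gradient w (r • (ω:(Esp n)))‖ ^ 2)
          ≤ ∫⁻ r in Ioo (0:ℝ) R, ENNReal.ofReal (M^2) * ENNReal.ofReal (r ^ γ) := by
            refine lintegral_mono_ae ((ae_restrict_mem measurableSet_Ioo).mono fun r hr => ?_)
            rw [← ENNReal.ofReal_mul (sq_nonneg M)]
            refine ENNReal.ofReal_le_ofReal ?_
            rw [mul_comm (M^2) _]
            refine mul_le_mul_of_nonneg_left ?_ (Real.rpow_nonneg hr.1.le _)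
            exact pow_le_pow_left₀ (norm_nonneg _) (hMw _) 2
        _ = ENNReal.ofReal (M^2) * K2 := lintegral_const_mul' _ _ ENNReal.ofReal_ne_top
    calc J ω ≤ ∫⁻ r in Ioo 0 R ∪ Ici R,
          ENNReal.ofReal (r ^ (n-1)) * ENNReal.ofReal (G (r • (ω:(Esp n)))) := by
          rw [hJdef]; exact lintegral_mono_set hsub
      _ ≤ (∫⁻ r in Ioo (0:ℝ) R,
            ENNReal.ofReal (r ^ (n-1)) * ENNReal.ofReal (G (r • (ω:(Esp n)))))
          + ∫⁻ r in Ici R,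
            ENNReal.ofReal (r ^ (n-1)) * ENNReal.ofReal (G (r • (ω:(Esp n)))) :=
          lintegral_union_le _ _ _
      _ ≤ ENNReal.ofReal (M^2) * K2 + 0 := add_le_add hIoo (le_of_eq hIci)
      _ = ENNReal.ofReal (M^2) * K2 := add_zero _
  -- finiteness of L
  have hLfin : L ≠ ⊤ := by
    rw [hL]
    refine ne_top_of_le_ne_top ?_ (lintegral_mono hJbound)
    rw [lintegral_const]
    exact ENNReal.mul_ne_top (ENNReal.mul_ne_top ENNReal.ofReal_ne_top hK2) hσ_fin
  -- integrate the per-ray bound over the sphere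
  have hmain : σ * ENNReal.ofReal ((v x₀)^2) ≤ K1 * L := by
    calc σ * ENNReal.ofReal ((v x₀)^2)
        = ∫⁻ _ω, ENNReal.ofReal ((v x₀)^2) ∂((volume : Measure (Esp n)).toSphere) := by
          rw [lintegral_const, mul_comm]
      _ ≤ ∫⁻ ω, K1 * J ω ∂((volume : Measure (Esp n)).toSphere) := lintegral_mono hray
      _ = K1 * ∫⁻ ω, J ω ∂((volume : Measure (Esp n)).toSphere) :=
          lintegral_const_mul' _ _ hK1
      _ = K1 * L := by rw [hL]
  have hineq : ENNReal.ofReal ((v x₀)^2) ≤ K1 * σ⁻¹ * L := by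
    have h := mul_le_mul_right hmain σ⁻¹
    rw [← mul_assoc, ENNReal.inv_mul_cancel hσ_pos hσ_fin, one_mul] at h
    calc ENNReal.ofReal ((v x₀)^2) ≤ σ⁻¹ * (K1 * L) := h
      _ = K1 * σ⁻¹ * L := by ring
  have hfin2 : K1 * σ⁻¹ ≠ ⊤ := ENNReal.mul_ne_top hK1 (ENNReal.inv_ne_top.mpr hσ_pos)
  have hreal : (v x₀)^2 ≤ (K1 * σ⁻¹).toReal * L.toReal := by
    have h := ENNReal.toReal_mono (ENNReal.mul_ne_top hfin2 hLfin) hineq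
    rwa [ENNReal.toReal_ofReal (sq_nonneg _), ENNReal.toReal_mul] at h
  rw [hIL]
  refine hreal.trans ?_
  refine mul_le_mul_of_nonneg_right ?_ ENNReal.toReal_nonneg
  linarith
end
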